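/- In a directed multigraph with unit-capacity links, where a merging node v with d_in incoming links and d_out outgoing links is decomposed by introducing incoming auxiliary nodes u_1,…,u_{d_in} and outgoing auxiliary nodes w_1,…,w_{d_out}, redirecting the i-th incoming link to u_i, making the j-th outgoing link the sole outgoing link of w_j, and inserting a unit-capacity link (u_i, w_j) for every pair (i,j), the value of the max-flow between the source s and every sink t not equal to v is preserved. -/

import Mathlib

/-- A directed multigraph on vertex type `V`. -/
structure Multigraph (V : Type) where
  E : Type
  src : E → V
  tgt : E → V

variable {V : Type}

/-- `IsFlowValue G s t f n`: `f` is a feasible unit-capacity `s`-`t` flow of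
value `n` in `G`: every link carries flow at most `1`, flow is conserved at
every node other than `s` and `t`, and the net outflow of `s` is `n`. -/
def IsFlowValue [DecidableEq V] (G : Multigraph V) [Fintype G.E]
    (s t : V) (f : G.E → ℕ) (n : ℕ) : Prop :=
  (∀ e, f e ≤ 1) ∧
  (∀ v, v ≠ s → v ≠ t →
    ∑ e ∈ Finset.univ.filter (fun e => G.tgt e = v), f e =
    ∑ e ∈ Finset.univ.filter (fun e => G.src e = v), f e) ∧
  ((∑ e ∈ Finset.univ.filter (fun e => G.src e = s), (f e : ℤ)) -
    ∑ e ∈ Finset.univ.filter (fun e => G.tgt e = s), (f e : ℤ)) = (n : ℤ)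

/-- The maximum `s`-`t` flow value in the unit-capacity multigraph `G`. -/
noncomputable def maxFlow [DecidableEq V] (G : Multigraph V) [Fintype G.E]
    (s t : V) : ℕ :=
  sSup {n : ℕ | ∃ f : G.E → ℕ, IsFlowValue G s t f n}

/-- The decomposition of a merging node `v` of `G`: new incoming auxiliary
nodes `u_i` (one per incoming link of `v`), new outgoing auxiliary nodes `w_j`
(one per outgoing link of `v`), each incoming link of `v` redirected to its
`u_i`, each outgoing link of `v` made the sole outgoing link of its `w_j`, and
a new unit-capacity link `(u_i, w_j)` for every pair `(i, j)`. -/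
def decompose [DecidableEq V] (G : Multigraph V) (v : V) :
    Multigraph (V ⊕ {e : G.E // G.tgt e = v} ⊕ {e : G.E // G.src e = v}) where
  E := G.E ⊕ ({e : G.E // G.tgt e = v} × {e : G.E // G.src e = v})
  src := fun e =>
    match e with
    | Sum.inl e =>
        if h : G.src e = v then Sum.inr (Sum.inr ⟨e, h⟩) else Sum.inl (G.src e)
    | Sum.inr p => Sum.inr (Sum.inl p.1)
  tgt := fun e =>
    match e with
    | Sum.inl e =>
        if h : G.tgt e = v then Sum.inr (Sum.inl ⟨e, h⟩) else Sum.inl (G.tgt e)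
    | Sum.inr p => Sum.inr (Sum.inr p.2)

instance [DecidableEq V] (G : Multigraph V) [Fintype G.E] [DecidableEq G.E]
    (v : V) : Fintype (decompose G v).E := by
  unfold decompose; infer_instance

set_option linter.unusedSectionVars false
set_option linter.unusedVariables false

section
variable [DecidableEq V] (G : Multigraph V) [Fintype G.E] [DecidableEq G.E] (v : V)
  {M : Type} [AddCommMonoid M]

open Finset

lemma tgt_inl (a : G.E) : (decompose G v).tgt (Sum.inl a) =
    if h : G.tgt a = v then Sum.inr (Sum.inl ⟨a, h⟩) else Sum.inl (G.tgt a) := rfl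

lemma tgt_inr (b : _) : (decompose G v).tgt (Sum.inr b) = Sum.inr (Sum.inr b.2) := rfl

lemma src_inl (a : G.E) : (decompose G v).src (Sum.inl a) =
    if h : G.src a = v then Sum.inr (Sum.inr ⟨a, h⟩) else Sum.inl (G.src a) := rfl

lemma src_inr (b : _) : (decompose G v).src (Sum.inr b) = Sum.inr (Sum.inl b.1) := rfl

lemma split_sum (p : (decompose G v).E → Prop) [DecidablePred p]
    (g : (decompose G v).E → M) :
    ∑ e ∈ univ.filter p, g e =
      (∑ a ∈ @Finset.filter G.E (fun a => p (Sum.inl a)) (fun a => ‹DecidablePred p› (Sum.inl a)) univ, g (Sum.inl a)) +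
      ∑ b ∈ @Finset.filter ({e : G.E // G.tgt e = v} × {e : G.E // G.src e = v}) (fun b => p (Sum.inr b)) (fun b => ‹DecidablePred p› (Sum.inr b)) univ, g (Sum.inr b) := by
  rw [Finset.sum_filter, Finset.sum_filter, Finset.sum_filter]
  exact Fintype.sum_sum_type _

lemma sum_tgt_inl (x : V) (hx : x ≠ v) (g : (decompose G v).E → M) :
    ∑ e ∈ univ.filter (fun e => (decompose G v).tgt e = Sum.inl x), g e =
      ∑ e ∈ univ.filter (fun e : G.E => G.tgt e = x), g (Sum.inl e) := by
  rw [split_sum]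
  have h2 : (univ.filter (fun b : ({e : G.E // G.tgt e = v} × {e : G.E // G.src e = v}) => (decompose G v).tgt (Sum.inr b) = Sum.inl x)) = ∅ := by
    ext b; simp [tgt_inr]
  rw [h2, Finset.sum_empty, add_zero]
  congr 1
  ext a
  rw [Finset.mem_filter]; simp only [mem_filter, mem_univ, true_and, tgt_inl]
  split_ifs with h
  · simp only [reduceCtorEq, false_iff]
    exact fun hc => hx (hc ▸ h)
  · simp only [Sum.inl.injEq]

lemma sum_src_inl (x : V) (hx : x ≠ v) (g : (decompose G v).E → M) :
    ∑ e ∈ univ.filter (fun e => (decompose G v).src e = Sum.inl x), g e =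
      ∑ e ∈ univ.filter (fun e : G.E => G.src e = x), g (Sum.inl e) := by
  rw [split_sum]
  have h2 : (univ.filter (fun b : ({e : G.E // G.tgt e = v} × {e : G.E // G.src e = v}) => (decompose G v).src (Sum.inr b) = Sum.inl x)) = ∅ := by
    ext b; simp [src_inr]
  rw [h2, Finset.sum_empty, add_zero]
  congr 1
  ext a
  rw [Finset.mem_filter]; simp only [mem_filter, mem_univ, true_and, src_inl]
  split_ifs with h
  · simp only [reduceCtorEq, false_iff]
    exact fun hc => hx (hc ▸ h)
  · simp only [Sum.inl.injEq]

lemma sum_tgt_u (i : {e : G.E // G.tgt e = v}) (g : (decompose G v).E → M) :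
    ∑ e ∈ univ.filter (fun e => (decompose G v).tgt e = Sum.inr (Sum.inl i)), g e =
      g (Sum.inl i.1) := by
  rw [split_sum]
  have h2 : (univ.filter (fun b : ({e : G.E // G.tgt e = v} × {e : G.E // G.src e = v}) => (decompose G v).tgt (Sum.inr b) = Sum.inr (Sum.inl i))) = ∅ := by
    ext b; simp [tgt_inr]
  rw [h2, Finset.sum_empty, add_zero]
  have h1 : (univ.filter (fun a : G.E => (decompose G v).tgt (Sum.inl a) = Sum.inr (Sum.inl i))) = {i.1} := by
    ext a
    rw [Finset.mem_filter]; simp only [mem_filter, mem_univ, true_and, tgt_inl, mem_singleton]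
    split_ifs with h
    · constructor
      · intro hc
        have : (⟨a, h⟩ : {e : G.E // G.tgt e = v}) = i := by
          injection (Sum.inr.inj hc)
        exact congrArg Subtype.val this
      · rintro rfl
        exact congrArg (Sum.inr ∘ Sum.inl) (Subtype.ext rfl)
    · simp only [reduceCtorEq, false_iff]
      intro hc; subst hc; exact h i.2
  rw [h1, Finset.sum_singleton]

lemma sum_src_u (i : {e : G.E // G.tgt e = v}) (g : (decompose G v).E → M) :
    ∑ e ∈ univ.filter (fun e => (decompose G v).src e = Sum.inr (Sum.inl i)), g e =
      ∑ j : {e : G.E // G.src e = v}, g (Sum.inr (i, j)) := by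
  rw [split_sum]
  have h1 : (univ.filter (fun a : G.E => (decompose G v).src (Sum.inl a) = Sum.inr (Sum.inl i))) = ∅ := by
    ext a
    rw [Finset.mem_filter]; simp only [mem_filter, mem_univ, true_and, src_inl, notMem_empty, iff_false]
    split_ifs with h <;> simp
  rw [h1, Finset.sum_empty, zero_add]
  have h2 : (univ.filter (fun b : ({e : G.E // G.tgt e = v} × {e : G.E // G.src e = v}) => (decompose G v).src (Sum.inr b) = Sum.inr (Sum.inl i))) = univ.filter (fun b => b.1 = i) := by
    ext b; simp [src_inr]
  rw [h2, Finset.sum_filter, Fintype.sum_prod_type]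
  have hh : ∀ i' : {e : G.E // G.tgt e = v},
      ∑ j : {e : G.E // G.src e = v}, (if i' = i then g (Sum.inr (i', j)) else 0)
      = if i' = i then ∑ j : {e : G.E // G.src e = v}, g (Sum.inr (i', j)) else 0 := by
    intro i'; split_ifs <;> simp
  simp only [hh]
  rw [Finset.sum_ite_eq' univ i]
  simp

lemma sum_src_w (j : {e : G.E // G.src e = v}) (g : (decompose G v).E → M) :
    ∑ e ∈ univ.filter (fun e => (decompose G v).src e = Sum.inr (Sum.inr j)), g e =
      g (Sum.inl j.1) := by
  rw [split_sum]
  have h2 : (univ.filter (fun b : ({e : G.E // G.tgt e = v} × {e : G.E // G.src e = v}) => (decompose G v).src (Sum.inr b) = Sum.inr (Sum.inr j))) = ∅ := by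
    ext b; simp [src_inr]
  rw [h2, Finset.sum_empty, add_zero]
  have h1 : (univ.filter (fun a : G.E => (decompose G v).src (Sum.inl a) = Sum.inr (Sum.inr j))) = {j.1} := by
    ext a
    rw [Finset.mem_filter]; simp only [mem_filter, mem_univ, true_and, src_inl, mem_singleton]
    split_ifs with h
    · constructor
      · intro hc
        have : (⟨a, h⟩ : {e : G.E // G.src e = v}) = j := by
          injection (Sum.inr.inj hc)
        exact congrArg Subtype.val this
      · rintro rfl
        exact congrArg (Sum.inr ∘ Sum.inr) (Subtype.ext rfl)
    · simp only [reduceCtorEq, false_iff]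
      intro hc; subst hc; exact h j.2
  rw [h1, Finset.sum_singleton]

lemma sum_tgt_w (j : {e : G.E // G.src e = v}) (g : (decompose G v).E → M) :
    ∑ e ∈ univ.filter (fun e => (decompose G v).tgt e = Sum.inr (Sum.inr j)), g e =
      ∑ i : {e : G.E // G.tgt e = v}, g (Sum.inr (i, j)) := by
  rw [split_sum]
  have h1 : (univ.filter (fun a : G.E => (decompose G v).tgt (Sum.inl a) = Sum.inr (Sum.inr j))) = ∅ := by
    ext a
    rw [Finset.mem_filter]; simp only [mem_filter, mem_univ, true_and, tgt_inl, notMem_empty, iff_false]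
    split_ifs with h <;> simp
  rw [h1, Finset.sum_empty, zero_add]
  have h2 : (univ.filter (fun b : ({e : G.E // G.tgt e = v} × {e : G.E // G.src e = v}) => (decompose G v).tgt (Sum.inr b) = Sum.inr (Sum.inr j))) = univ.filter (fun b => b.2 = j) := by
    ext b; simp [tgt_inr]
  rw [h2, Finset.sum_filter, Fintype.sum_prod_type]
  refine Finset.sum_congr rfl fun i' _ => ?_
  rw [Finset.sum_ite_eq' univ j]
  simp

lemma sum_node_v (g : (decompose G v).E → M) :
    (∑ e ∈ univ.filter (fun e => (decompose G v).tgt e = Sum.inl v), g e = 0) ∧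
    (∑ e ∈ univ.filter (fun e => (decompose G v).src e = Sum.inl v), g e = 0) := by
  constructor
  · have : (univ.filter (fun e => (decompose G v).tgt e = Sum.inl v)) = ∅ := by
      ext e
      simp only [mem_filter, mem_univ, true_and, notMem_empty, iff_false]
      rcases e with a | b
      · simp only [tgt_inl]
        split_ifs with h
        · simp
        · simp only [Sum.inl.injEq]; exact h
      · rw [tgt_inr]; simp
    rw [this, Finset.sum_empty]
  · have : (univ.filter (fun e => (decompose G v).src e = Sum.inl v)) = ∅ := by
      ext e
      simp only [mem_filter, mem_univ, true_and, notMem_empty, iff_false]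
      rcases e with a | b
      · simp only [src_inl]
        split_ifs with h
        · simp
        · simp only [Sum.inl.injEq]; exact h
      · rw [src_inr]; simp
    rw [this, Finset.sum_empty]
end

section
variable [DecidableEq V] (G : Multigraph V) [Fintype G.E] [DecidableEq G.E] (v : V)
open Finset

lemma reverse_dir (s t : V) (hs : s ≠ v) (ht : t ≠ v)
    (f' : (decompose G v).E → ℕ) (n : ℕ)
    (h : IsFlowValue (decompose G v) (Sum.inl s) (Sum.inl t) f' n) :
    IsFlowValue G s t (fun e => f' (Sum.inl e)) n := by
  obtain ⟨hcap, hcons, hval⟩ := h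
  refine ⟨fun e => hcap _, ?_, ?_⟩
  · intro x hxs hxt
    by_cases hxv : x = v
    · rw [hxv]
      have lhs : ∑ e ∈ univ.filter (fun e : G.E => G.tgt e = v), f' (Sum.inl e)
          = ∑ i : {e : G.E // G.tgt e = v}, f' (Sum.inl i.1) :=
        Finset.sum_subtype _ (by simp) _
      have rhs : ∑ e ∈ univ.filter (fun e : G.E => G.src e = v), f' (Sum.inl e)
          = ∑ j : {e : G.E // G.src e = v}, f' (Sum.inl j.1) :=
        Finset.sum_subtype _ (by simp) _
      rw [lhs, rhs]
      have hu : ∀ i : {e : G.E // G.tgt e = v},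
          f' (Sum.inl i.1) = ∑ j : {e : G.E // G.src e = v}, f' (Sum.inr (i, j)) := by
        intro i
        have := hcons (Sum.inr (Sum.inl i)) (by simp) (by simp)
        rwa [sum_tgt_u, sum_src_u] at this
      have hw : ∀ j : {e : G.E // G.src e = v},
          (∑ i : {e : G.E // G.tgt e = v}, f' (Sum.inr (i, j))) = f' (Sum.inl j.1) := by
        intro j
        have := hcons (Sum.inr (Sum.inr j)) (by simp) (by simp)
        rwa [sum_tgt_w, sum_src_w] at this
      calc ∑ i : {e : G.E // G.tgt e = v}, f' (Sum.inl i.1)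
          = ∑ i : {e : G.E // G.tgt e = v}, ∑ j : {e : G.E // G.src e = v},
              f' (Sum.inr (i, j)) := by exact Finset.sum_congr rfl fun i _ => hu i
        _ = ∑ j : {e : G.E // G.src e = v}, ∑ i : {e : G.E // G.tgt e = v},
              f' (Sum.inr (i, j)) := Finset.sum_comm
        _ = ∑ j : {e : G.E // G.src e = v}, f' (Sum.inl j.1) :=
            Finset.sum_congr rfl fun j _ => hw j
    · have := hcons (Sum.inl x) (by simpa using hxs) (by simpa using hxt)
      rwa [sum_tgt_inl G v x hxv, sum_src_inl G v x hxv] at this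
  · rw [sum_src_inl G v s hs (fun e => (f' e : ℤ)),
      sum_tgt_inl G v s hs (fun e => (f' e : ℤ))] at hval
    exact hval

lemma forward_dir (s t : V) (hs : s ≠ v) (ht : t ≠ v)
    (hout : 1 ≤ (Finset.univ.filter (fun e : G.E => G.src e = v)).card)
    (f : G.E → ℕ) (n : ℕ) (h : IsFlowValue G s t f n) :
    ∃ f' : (decompose G v).E → ℕ,
      IsFlowValue (decompose G v) (Sum.inl s) (Sum.inl t) f' n := by
  classical
  obtain ⟨hcap, hcons, hval⟩ := h
  set A : Finset {e : G.E // G.tgt e = v} := univ.filter (fun i => f i.1 = 1) with hA_def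
  set B : Finset {e : G.E // G.src e = v} := univ.filter (fun j => f j.1 = 1) with hB_def
  have memA : ∀ i : {e : G.E // G.tgt e = v}, i ∈ A ↔ f i.1 = 1 := by
    intro i; simp [hA_def]
  have memB : ∀ j : {e : G.E // G.src e = v}, j ∈ B ↔ f j.1 = 1 := by
    intro j; simp [hB_def]
  have hAB : Fintype.card A = Fintype.card B := by
    rw [Fintype.card_coe, Fintype.card_coe]
    have hA : (∑ i : {e : G.E // G.tgt e = v}, f i.1) = A.card := by
      rw [Finset.card_filter]
      refine Finset.sum_congr rfl fun i _ => ?_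
      have := hcap i.1
      split_ifs with h1 <;> omega
    have hB : (∑ j : {e : G.E // G.src e = v}, f j.1) = B.card := by
      rw [Finset.card_filter]
      refine Finset.sum_congr rfl fun j _ => ?_
      have := hcap j.1
      split_ifs with h1 <;> omega
    have hv := hcons v (Ne.symm hs) (Ne.symm ht)
    have hv1 : ∑ e ∈ univ.filter (fun e : G.E => G.tgt e = v), f e
        = ∑ i : {e : G.E // G.tgt e = v}, f i.1 :=
      Finset.sum_subtype _ (by simp) _
    have hv2 : ∑ e ∈ univ.filter (fun e : G.E => G.src e = v), f e
        = ∑ j : {e : G.E // G.src e = v}, f j.1 :=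
      Finset.sum_subtype _ (by simp) _
    rw [hv1, hv2] at hv
    omega
  have equiv : (A : Type) ≃ (B : Type) := by exact Fintype.equivOfCardEq hAB
  obtain ⟨e₀, he₀⟩ := Finset.card_pos.mp hout
  have he₀' : G.src e₀ = v := by simpa using he₀
  set j₀ : {e : G.E // G.src e = v} := ⟨e₀, he₀'⟩ with hj₀
  set m : {e : G.E // G.tgt e = v} → {e : G.E // G.src e = v} :=
    fun i => if h : i ∈ A then (equiv ⟨i, h⟩ : {e : G.E // G.src e = v}) else j₀ with hm
  have hmA : ∀ (i) (hi : i ∈ A), m i = (equiv ⟨i, hi⟩ : {e : G.E // G.src e = v}) := by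
    intro i hi; simp [hm, hi]
  set f' : (decompose G v).E → ℕ := fun e => match e with
    | Sum.inl a => f a
    | Sum.inr b => if b.1 ∈ A ∧ m b.1 = b.2 then 1 else 0 with hf'
  have hf'l : ∀ a : G.E, f' (Sum.inl a) = f a := fun a => rfl
  have hf'r : ∀ b, f' (Sum.inr b) = if b.1 ∈ A ∧ m b.1 = b.2 then 1 else 0 :=
    fun b => rfl
  have K1 : ∀ i : {e : G.E // G.tgt e = v},
      (∑ j : {e : G.E // G.src e = v}, f' (Sum.inr (i, j))) = f i.1 := by
    intro i
    by_cases hi : i ∈ A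
    · have : (∑ j : {e : G.E // G.src e = v}, f' (Sum.inr (i, j)))
          = ∑ j : {e : G.E // G.src e = v}, if m i = j then 1 else 0 := by
        refine Finset.sum_congr rfl fun j _ => ?_
        rw [hf'r]; simp [hi]
      rw [this, Finset.sum_ite_eq univ (m i) (fun _ => 1)]
      simp [(memA i).mp hi]
    · have h1 : f i.1 ≠ 1 := fun hc => hi ((memA i).mpr hc)
      have h2 := hcap i.1
      have h0 : f i.1 = 0 := by omega
      rw [h0]
      refine Finset.sum_eq_zero fun j _ => ?_
      rw [hf'r]; simp [hi]
  have K2 : ∀ j : {e : G.E // G.src e = v},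
      (∑ i : {e : G.E // G.tgt e = v}, f' (Sum.inr (i, j))) = f j.1 := by
    intro j
    have hsum : (∑ i : {e : G.E // G.tgt e = v}, f' (Sum.inr (i, j)))
        = (univ.filter (fun i : {e : G.E // G.tgt e = v} => i ∈ A ∧ m i = j)).card := by
      rw [Finset.card_filter]
    by_cases hj : j ∈ B
    · have hfil : univ.filter (fun i : {e : G.E // G.tgt e = v} => i ∈ A ∧ m i = j)
          = {((equiv.symm ⟨j, hj⟩ : A) : {e : G.E // G.tgt e = v})} := by
        ext i
        simp only [Finset.mem_filter, Finset.mem_univ, true_and, Finset.mem_singleton]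
        constructor
        · rintro ⟨hi, hmi⟩
          have h1 : (equiv ⟨i, hi⟩ : {e : G.E // G.src e = v}) = j := by
            rw [← hmi, hmA i hi]
          have h2 : equiv ⟨i, hi⟩ = ⟨j, hj⟩ := Subtype.ext h1
          have h3 : (⟨i, hi⟩ : A) = equiv.symm ⟨j, hj⟩ := by
            rw [← h2, Equiv.symm_apply_apply]
          exact congrArg Subtype.val h3
        · rintro rfl
          have hi : ((equiv.symm ⟨j, hj⟩ : A) : {e : G.E // G.tgt e = v}) ∈ A :=
            (equiv.symm ⟨j, hj⟩).2
          refine ⟨hi, ?_⟩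
          rw [hmA _ hi]
          have h4 : (⟨((equiv.symm ⟨j, hj⟩ : A) : {e : G.E // G.tgt e = v}), hi⟩ : A)
              = equiv.symm ⟨j, hj⟩ := Subtype.ext rfl
          rw [h4, Equiv.apply_symm_apply]
      rw [hsum, hfil, Finset.card_singleton]
      exact ((memB j).mp hj).symm
    · have hfil : univ.filter (fun i : {e : G.E // G.tgt e = v} => i ∈ A ∧ m i = j) = ∅ := by
        ext i
        simp only [Finset.mem_filter, Finset.mem_univ, true_and, Finset.notMem_empty,
          iff_false, not_and]
        intro hi hmi
        have hb : m i ∈ B := by rw [hmA i hi]; exact (equiv ⟨i, hi⟩).2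
        exact hj (hmi ▸ hb)
      have h1 : f j.1 ≠ 1 := fun hc => hj ((memB j).mpr hc)
      have h2 := hcap j.1
      have h0 : f j.1 = 0 := by omega
      rw [hsum, hfil, h0, Finset.card_empty]
  refine ⟨f', ?_, ?_, ?_⟩
  · intro e
    rcases e with a | b
    · exact hcap a
    · rw [hf'r]; split_ifs <;> omega
  · intro x hx1 hx2
    rcases x with x | (i | j)
    · by_cases hxv : x = v
      · rw [hxv, (sum_node_v G v f').1, (sum_node_v G v f').2]
      · rw [sum_tgt_inl G v x hxv, sum_src_inl G v x hxv]
        simp only [hf'l]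
        exact hcons x (fun hc => hx1 (congrArg Sum.inl hc))
          (fun hc => hx2 (congrArg Sum.inl hc))
    · rw [sum_tgt_u, sum_src_u, hf'l]
      exact (K1 i).symm
    · rw [sum_tgt_w, sum_src_w, hf'l]
      exact K2 j
  · rw [sum_src_inl G v s hs, sum_tgt_inl G v s hs]
    exact hval
end


/-- Decomposing a merging node `v` (with `d_in ≥ 2` incoming and `d_out ≥ 1`
outgoing links, `v` distinct from the source `s` and the sink `t`) preserves
the value of the maximum `s`-`t` flow in the unit-capacity multigraph `G`. -/
theorem maxFlow_decompose [DecidableEq V] (G : Multigraph V) [Fintype G.E]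
    [DecidableEq G.E] (s t v : V) (hs : s ≠ v) (ht : t ≠ v) (hst : s ≠ t)
    (hin : 2 ≤ (Finset.univ.filter (fun e : G.E => G.tgt e = v)).card)
    (hout : 1 ≤ (Finset.univ.filter (fun e : G.E => G.src e = v)).card) :
    maxFlow (decompose G v) (Sum.inl s) (Sum.inl t) = maxFlow G s t := by
  unfold maxFlow
  congr 1
  ext n
  simp only [Set.mem_setOf_eq]
  constructor
  · rintro ⟨f', hf'⟩
    exact ⟨_, reverse_dir G v s t hs ht f' n hf'⟩
  · rintro ⟨f, hf⟩
    exact forward_dir G v s t hs ht hout f n hf
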